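/- Let m ≥ 1 and l ≥ 4 be integers, A = {m-1, 2m+1}, B = {m-1, 3m+1} ⊆ ℤ. If x ∈ (l-4)A + B - (l-4)m and x < 2m+5-l, then x = m+3-l. -/

import Mathlib

/-! Writing 2m+1 = (m-1) + (m+2), every element of (l-4)A is (l-4)(m-1) + k(m+2) with k ≥ 0, so
x = m+3-l + k(m+2) or x = 3m+5-l + k(m+2); the bound x < 2m+5-l leaves only the first case with
k = 0. -/

/-- The n-fold Minkowski sum of a set A ⊆ ℤ with itself (0-fold sum is {0}). -/
def minkowskiPow (n : ℕ) (A : Set ℤ) : Set ℤ :=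
  {x | ∃ f : Fin n → ℤ, (∀ i, f i ∈ A) ∧ x = ∑ i, f i}

lemma exists_eq_of_mem_minkowskiPow_pair {n : ℕ} {a d y : ℤ}
    (hy : y ∈ minkowskiPow n {a, a + d}) : ∃ k : ℕ, y = n * a + k * d := by
  classical
  obtain ⟨f, hf, rfl⟩ := hy
  refine ⟨(Finset.univ.filter (f · ≠ a)).card, ?_⟩
  have hsplit : ∀ i, f i = a + if f i ≠ a then d else 0 := by
    intro i
    rcases hf i with h | h <;> by_cases ha : f i = a <;> simp_all
  rw [Finset.sum_congr rfl fun i _ => hsplit i, Finset.sum_add_distrib, Finset.sum_ite,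
    Finset.sum_const, Finset.sum_const, Finset.sum_const_zero]
  simp [mul_comm]

theorem minkowski_gap_general (m l : ℕ) (hl : 4 ≤ l) (x : ℤ)
    (hx : ∃ y ∈ minkowskiPow (l - 4) ({(m : ℤ) - 1, 2 * (m : ℤ) + 1} : Set ℤ),
      ∃ b ∈ ({(m : ℤ) - 1, 3 * (m : ℤ) + 1} : Set ℤ), x = y + b - ((l : ℤ) - 4) * m)
    (hlt : x < 2 * (m : ℤ) + 5 - l) :
    x = (m : ℤ) + 3 - l := by
  obtain ⟨y, hy, b, hb, rfl⟩ := hx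
  have hy' : y ∈ minkowskiPow (l - 4) {(m : ℤ) - 1, ((m : ℤ) - 1) + (m + 2)} := by
    convert hy using 4; ring
  obtain ⟨k, rfl⟩ := exists_eq_of_mem_minkowskiPow_pair hy'
  push_cast [hl] at hlt ⊢
  rcases hb with rfl | rfl
  · have hk : (k : ℤ) * (m + 2) < 1 * (m + 2) := by linarith
    obtain rfl : k = 0 := by
      have := lt_of_mul_lt_mul_right hk (by positivity)
      omega
    ring
  · nlinarith

/-- Gap lemma: for m ≥ 1, l ≥ 4, A = {m-1, 2m+1}, B = {m-1, 3m+1}, if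
x ∈ (l-4)A + B - (l-4)m and x < 2m+5-l, then x = m+3-l. -/
theorem minkowski_gap (m l : ℕ) (hm : 1 ≤ m) (hl : 4 ≤ l) (x : ℤ)
    (hx : ∃ y ∈ minkowskiPow (l - 4) ({(m : ℤ) - 1, 2 * (m : ℤ) + 1} : Set ℤ),
      ∃ b ∈ ({(m : ℤ) - 1, 3 * (m : ℤ) + 1} : Set ℤ), x = y + b - ((l : ℤ) - 4) * m)
    (hlt : x < 2 * (m : ℤ) + 5 - l) :
    x = (m : ℤ) + 3 - l :=
  minkowski_gap_general m l hl x hx hlt
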